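/- arXiv:2404.06019 — 3 statements merged into one kernel-verified Lean document; each statement's English description precedes it below -/
import Mathlib

section
/- Let $\theta^1 > \cdots > \theta^K \geq 0$ with full-support prior $\mu_0$ and production cost $c$ satisfying $\theta^K \le c < \theta^1$ and $\mathbb{E}[\theta] > c$. Define $w_k^N(q) = \max\{v_k^N(q) - c, 0\}$ where $v_k^N$ is the sequential self-conquering skepticism posterior mean. Then there exists a unique pair $(k^*, q^*)$ with $1 \le k^* \le K$, $q^* \in [0,1]$, such that $\theta^{k^*}$ is the highest type for which $w_{k^*}^N(q) = 0$ for some $q \in [0,1]$, and $q^*$ is the minimal such $q$. -/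
/-! The type set `{k | ∃ q ∈ [0,1], w_k(q) = 0}` is finite, and nonempty because the lowest
type at `q = 0` has posterior mean `θ^K ≤ c`; so it has a least element `k*`. For `k*` the
zero set in `q` is either started by `q = 0`, or `k*` is not the lowest type: then some mass
sits strictly below `θ^{k*}`, the denominator of `v_{k*}^N` stays positive on `[0,1]`, and the
zero set is compact, so it has a least element `q*`. Uniqueness is that of least elements. -/

open Finset

/-- Sequential self-conquering skepticism posterior mean. -/
noncomputable def vNk {K : ℕ} (θ μ : Fin K → ℝ) (k : Fin K) (q : ℝ) : ℝ :=
  (μ k * (1 - q) * θ k + ∑ j ∈ univ.filter (fun j => k < j), μ j * θ j) /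
    (μ k * (1 - q) + ∑ j ∈ univ.filter (fun j => k < j), μ j)

/-- Sequential self-conquering skepticism value (producer outside value). -/
noncomputable def wNk {K : ℕ} (θ μ : Fin K → ℝ) (c : ℝ) (k : Fin K) (q : ℝ) : ℝ :=
  max (vNk θ μ k q - c) 0

section
variable {K : ℕ} (θ μ : Fin K → ℝ) (c : ℝ)

theorem wNk_eq_zero_iff {k : Fin K} {q : ℝ} : wNk θ μ c k q = 0 ↔ vNk θ μ k q ≤ c := by
  rw [wNk, max_eq_right_iff, sub_nonpos]

theorem vNk_zero_of_isMax {k : Fin K} (hk : IsMax k) (hμk : μ k ≠ 0) :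
    vNk θ μ k 0 = θ k := by
  have hlower : univ.filter (fun j => k < j) = ∅ := filter_false_of_mem fun _ _ => hk.not_lt
  rw [vNk, hlower, sum_empty, sum_empty, sub_zero, mul_one, add_zero, add_zero,
    mul_div_cancel_left₀ _ hμk]

variable {μ}

theorem continuousOn_vNk (hμ : ∀ j, 0 < μ j) {k : Fin K} (hk : ¬IsMax k) :
    ContinuousOn (vNk θ μ k) (Set.Icc 0 1) := by
  obtain ⟨j, hkj⟩ := not_isMax_iff.1 hk
  have hlower : 0 < ∑ j ∈ univ.filter (fun j => k < j), μ j :=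
    sum_pos (fun j _ => hμ j) ⟨j, mem_filter.2 ⟨mem_univ j, hkj⟩⟩
  refine ContinuousOn.div (by fun_prop) (by fun_prop) fun q hq => ?_
  have : 0 ≤ μ k * (1 - q) := mul_nonneg (hμ k).le (sub_nonneg.2 hq.2)
  positivity

theorem isCompact_setOf_wNk_eq_zero (hμ : ∀ j, 0 < μ j) {k : Fin K} (hk : ¬IsMax k) :
    IsCompact {q ∈ Set.Icc (0 : ℝ) 1 | wNk θ μ c k q = 0} := by
  simp_rw [wNk_eq_zero_iff]
  exact isCompact_Icc.of_isClosed_subset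
    ((continuousOn_vNk θ hμ hk).preimage_isClosed_of_isClosed isClosed_Icc isClosed_Iic)
    (Set.sep_subset _ _)

end

/-- Existence and uniqueness of the tipping point `(k*, q*)`: `k*` is the highest type
(least index) for which the skepticism value hits zero for some `q ∈ [0,1]`, and `q*`
is the minimal such `q`. -/
theorem stmt_6 (K : ℕ) (hK : 2 ≤ K) (θ μ : Fin K → ℝ) (c : ℝ)
    (hμ : ∀ k, 0 < μ k)
    (hc1 : θ ⟨K - 1, by omega⟩ ≤ c) :
    ∃! kq : Fin K × ℝ,
      IsLeast {k : Fin K | ∃ q ∈ Set.Icc (0:ℝ) 1, wNk θ μ c k q = 0} kq.1 ∧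
      IsLeast {q ∈ Set.Icc (0:ℝ) 1 | wNk θ μ c kq.1 q = 0} kq.2 := by
  set last : Fin K := ⟨K - 1, by omega⟩
  have hlast_max : IsMax last := fun j _ => Nat.le_sub_one_of_lt j.isLt
  have hlast_zero : wNk θ μ c last 0 = 0 := by
    rwa [wNk_eq_zero_iff, vNk_zero_of_isMax θ μ hlast_max (hμ last).ne']
  have h0_mem : (0 : ℝ) ∈ Set.Icc 0 1 := Set.left_mem_Icc.2 zero_le_one
  obtain ⟨kstar, hkstar⟩ :
      ∃ k, IsLeast {k : Fin K | ∃ q ∈ Set.Icc (0:ℝ) 1, wNk θ μ c k q = 0} k :=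
    (Set.toFinite _).isCompact.exists_isLeast ⟨last, 0, h0_mem, hlast_zero⟩
  obtain ⟨qstar, hqstar⟩ :
      ∃ q, IsLeast {q ∈ Set.Icc (0:ℝ) 1 | wNk θ μ c kstar q = 0} q := by
    by_cases h0 : wNk θ μ c kstar 0 = 0
    · exact ⟨0, ⟨h0_mem, h0⟩, fun q hq => hq.1.1⟩
    · have hkstar_max : ¬IsMax kstar := fun hmax =>
        h0 (hmax.eq_of_le (hkstar.2 ⟨0, h0_mem, hlast_zero⟩) ▸ hlast_zero)
      exact (isCompact_setOf_wNk_eq_zero θ c hμ hkstar_max).exists_isLeast hkstar.1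
  refine ⟨(kstar, qstar), ⟨hkstar, hqstar⟩, ?_⟩
  rintro ⟨k, q⟩ ⟨hk, hq⟩
  obtain rfl : k = kstar := hk.unique hkstar
  obtain rfl : q = qstar := hq.unique hqstar
  rfl
end

section
/- Fix constants $\alpha, \beta$ with $\beta > 0$, two types $\theta^i > \theta^j$, and quantities $Q^i, Q^j > 0$ with $Q^i + Q^j < \beta$. Define $\hat{v}(x,y) = \frac{\alpha - x\theta^i - y\theta^j}{\beta - x - y}$, and the two paths $\hat{v}_i^N(Q) = \hat{v}(Q,0)$ for $Q \in [0,Q^i]$, $\hat{v}_i^N(Q) = \hat{v}(Q^i, Q - Q^i)$ for $Q \in [Q^i, Q^i+Q^j]$; and $\hat{v}_j^N(Q) = \hat{v}(0,Q)$ for $Q \in [0,Q^j]$, $\hat{v}_j^N(Q) = \hat{v}(Q - Q^j, Q^j)$ for $Q \in [Q^j, Q^i+Q^j]$. Then $\hat{v}_j^N(Q) \geq \hat{v}_i^N(Q)$ for all $Q \in [0, Q^i + Q^j]$. -/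
/-!
Along both paths the total disclosed mass at stage `Q` is `Q` itself, so the two posterior means
share the denominator `β - Q > 0` and differ only in how `Q` splits between the two types. Moving
mass from the lower type `θʲ` to the higher type `θⁱ` lowers the numerator, and at every stage the
`i`-first path has disclosed at least as much of type `i` (namely `min Q Qⁱ`) as the `j`-first path
(namely `max 0 (Q - Qʲ)`).
-/

/-- Skepticism posterior mean as a function of the ex-ante disclosed masses of two types. -/
noncomputable def vhat (α β θi θj : ℝ) (x y : ℝ) : ℝ := (α - x * θi - y * θj) / (β - x - y)

/-- Path conquering type `i` first. -/
noncomputable def vPathI (α β θi θj Qi : ℝ) (Q : ℝ) : ℝ :=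
  if Q ≤ Qi then vhat α β θi θj Q 0 else vhat α β θi θj Qi (Q - Qi)

/-- Path conquering type `j` first. -/
noncomputable def vPathJ (α β θi θj Qj : ℝ) (Q : ℝ) : ℝ :=
  if Q ≤ Qj then vhat α β θi θj 0 Q else vhat α β θi θj (Q - Qj) Qj

section

variable {α β θi θj : ℝ}

theorem vhat_le_vhat_of_le {s x x' : ℝ} (hs : s < β) (hθ : θj ≤ θi) (hx : x' ≤ x) :
    vhat α β θi θj x (s - x) ≤ vhat α β θi θj x' (s - x') := by
  have hden (z : ℝ) : β - z - (s - z) = β - s := by ring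
  have hnum : (α - x' * θi - (s - x') * θj) - (α - x * θi - (s - x) * θj)
      = (x - x') * (θi - θj) := by ring
  unfold vhat
  rw [hden, hden]
  apply div_le_div_of_nonneg_right _ (sub_pos.2 hs).le
  linarith [mul_nonneg (sub_nonneg.2 hx) (sub_nonneg.2 hθ)]

theorem vPathI_eq_vhat_min (Qi Q : ℝ) :
    vPathI α β θi θj Qi Q = vhat α β θi θj (min Q Qi) (Q - min Q Qi) := by
  unfold vPathI
  split_ifs with h
  · rw [min_eq_left h, sub_self]
  · rw [min_eq_right (not_le.1 h).le]

theorem vPathJ_eq_vhat_max (Qj Q : ℝ) :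
    vPathJ α β θi θj Qj Q = vhat α β θi θj (max 0 (Q - Qj)) (Q - max 0 (Q - Qj)) := by
  unfold vPathJ
  split_ifs with h
  · rw [max_eq_left (sub_nonpos.2 h), sub_zero]
  · rw [max_eq_right (sub_nonneg.2 (not_le.1 h).le), sub_sub_cancel]

end

theorem stmt_7_general (α β θi θj Qi Qj : ℝ) (hθ : θi > θj)
    (hQi : 0 < Qi) (hQj : 0 < Qj) (hQ : Qi + Qj < β) :
    ∀ Q ∈ Set.Icc (0:ℝ) (Qi + Qj), vPathI α β θi θj Qi Q ≤ vPathJ α β θi θj Qj Q := by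
  rintro Q ⟨hQ0, hQle⟩
  have hsplit : max 0 (Q - Qj) ≤ min Q Qi :=
    max_le (le_min hQ0 hQi.le) (le_min (by linarith) (by linarith))
  rw [vPathI_eq_vhat_min, vPathJ_eq_vhat_max]
  exact vhat_le_vhat_of_le (by linarith) hθ.le hsplit

/-- Order-exchange lemma: conquering the higher type first yields pointwise weakly lower
skepticism posterior mean. -/
theorem stmt_7 (α β θi θj Qi Qj : ℝ) (hβ : 0 < β) (hθ : θi > θj)
    (hQi : 0 < Qi) (hQj : 0 < Qj) (hQ : Qi + Qj < β) :
    ∀ Q ∈ Set.Icc (0:ℝ) (Qi + Qj), vPathI α β θi θj Qi Q ≤ vPathJ α β θi θj Qj Q :=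
  stmt_7_general α β θi θj Qi Qj hθ hQi hQj hQ
end

section
/- Fix $K \ge 2$, types $\theta^1 > \cdots > \theta^K$ with prior $\mu_0$, and suppose the prior mass concentrates on a single type: consider a sequence of priors $\mu_n$ with $\mu_n^{k_0} \to 1$ for some fixed $k_0$. Then for each $k \le k_0$ the quantity $\mu_n^k \cdot \frac{\theta^k - \mathbb{E}_n[\theta \mid \theta \le \theta^k]}{\Pr_n(\theta^k \mid \theta \le \theta^k)} \ln\frac{1}{1 - \Pr_n(\theta^k \mid \theta \le \theta^k)}$ converges to $0$ as $n \to \infty$. -/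
open Finset Filter Topology

/-- As information asymmetry vanishes (the prior concentrates on a single type), each
term bounding the platform's revenue guarantee converges to zero. -/
theorem stmt_18 (K : ℕ) (hK : 2 ≤ K) (θ : Fin K → ℝ) (hθ : StrictAnti θ)
    (μn : ℕ → Fin K → ℝ) (hμn : ∀ n k, 0 < μn n k) (hμnsum : ∀ n, ∑ k, μn n k = 1)
    (k0 : Fin K) (hconc : Tendsto (fun n => μn n k0) atTop (nhds 1)) :
    ∀ k : Fin K, k ≤ k0 →
      Tendsto (fun n =>
        let S : ℝ := ∑ j ∈ univ.filter (fun j => k ≤ j), μn n j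
        let En : ℝ := (∑ j ∈ univ.filter (fun j => k ≤ j), μn n j * θ j) / S
        let Pn : ℝ := μn n k / S
        μn n k * ((θ k - En) / Pn) * Real.log (1 / (1 - Pn)))
        atTop (nhds 0) := by
  classical
  intro k hk
  set F : Finset (Fin K) := univ.filter (fun j => k ≤ j) with hF
  have hkF : k ∈ F := by simp [hF]
  have hk0F : k0 ∈ F := by simp [hF, hk]
  set SS : ℕ → ℝ := fun n => ∑ j ∈ F, μn n j with hSS
  set AA : ℕ → ℝ := fun n => ∑ j ∈ F, μn n j * (θ k - θ j) with hAA
  set TT : ℕ → ℝ := fun n => SS n - μn n k with hTT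
  have hSpos : ∀ n, 0 < SS n := fun n =>
    Finset.sum_pos (fun j _ => hμn n j) ⟨k, hkF⟩
  have hTerase : ∀ n, TT n = ∑ j ∈ F.erase k, μn n j := by
    intro n
    have := Finset.sum_erase_add F (fun j => μn n j) hkF
    simp only [hTT, hSS]
    linarith [this]
  have hAerase : ∀ n, AA n = ∑ j ∈ F.erase k, μn n j * (θ k - θ j) := by
    intro n
    have := Finset.sum_erase_add F (fun j => μn n j * (θ k - θ j)) hkF
    simp only [hAA]
    rw [← this]; ring
  have hTnn : ∀ n, 0 ≤ TT n := by
    intro n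
    rw [hTerase]
    exact Finset.sum_nonneg fun j _ => (hμn n j).le
  -- the constant C
  have hKpos : 0 < K := by omega
  set klast : Fin K := ⟨K - 1, by omega⟩ with hklast
  set C : ℝ := θ k - θ klast with hC
  have hle_klast : ∀ j : Fin K, j ≤ klast := by
    intro j
    have := j.isLt
    simp only [hklast, Fin.le_def]
    omega
  have hCnn : 0 ≤ C := by
    have := hθ.antitone (hle_klast k)
    simp only [hC]; linarith
  have hAnn : ∀ n, 0 ≤ AA n := by
    intro n
    rw [hAerase]
    refine Finset.sum_nonneg fun j hj => ?_
    have hkj : k ≤ j := by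
      have := Finset.mem_of_mem_erase hj
      simp [hF] at this; exact this
    have := hθ.antitone hkj
    exact mul_nonneg (hμn n j).le (by linarith)
  have hAle : ∀ n, AA n ≤ C * TT n := by
    intro n
    rw [hAerase, hTerase, Finset.mul_sum]
    refine Finset.sum_le_sum fun j hj => ?_
    have := hθ.antitone (hle_klast j)
    have h1 : θ k - θ j ≤ C := by simp only [hC]; linarith
    calc μn n j * (θ k - θ j) ≤ μn n j * C :=
          mul_le_mul_of_nonneg_left h1 (hμn n j).le
      _ = C * μn n j := mul_comm _ _
  -- limits of individual masses
  have hμ0 : ∀ j : Fin K, j ≠ k0 → Tendsto (fun n => μn n j) atTop (𝓝 0) := by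
    intro j hj
    have hub : ∀ n, μn n j ≤ 1 - μn n k0 := by
      intro n
      have h1 : μn n j ≤ ∑ i ∈ univ.erase k0, μn n i :=
        Finset.single_le_sum (fun i _ => (hμn n i).le)
          (Finset.mem_erase.mpr ⟨hj, Finset.mem_univ j⟩)
      have h2 : ∑ i ∈ univ.erase k0, μn n i + μn n k0 = 1 := by
        rw [Finset.sum_erase_add _ _ (Finset.mem_univ k0)]; exact hμnsum n
      linarith
    have hub' : Tendsto (fun n => 1 - μn n k0) atTop (𝓝 0) := by
      have := (tendsto_const_nhds (x := (1:ℝ)) (f := atTop)).sub hconc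
      simpa using this
    exact squeeze_zero (fun n => (hμn n j).le) hub hub'
  -- limit of each mass
  have hμlim : ∀ j : Fin K, Tendsto (fun n => μn n j) atTop
      (𝓝 (if j = k0 then 1 else 0)) := by
    intro j
    by_cases hj : j = k0
    · simp only [hj, if_pos rfl]; exact hconc
    · simp only [if_neg hj]; exact hμ0 j hj
  -- limit of SS
  have hSlim : Tendsto SS atTop (𝓝 1) := by
    have h := tendsto_finset_sum F (fun j _ => hμlim j)
    have hsum : (∑ j ∈ F, if j = k0 then (1:ℝ) else 0) = 1 := by
      rw [Finset.sum_ite_eq' F k0 (fun _ => (1:ℝ))]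
      simp [hk0F]
    rwa [hsum] at h
  -- limit of AA
  have hAlim : Tendsto AA atTop (𝓝 (θ k - θ k0)) := by
    have h := tendsto_finset_sum F
      (fun j _ => (hμlim j).mul (tendsto_const_nhds (x := θ k - θ j)))
    have hsum : (∑ j ∈ F, (if j = k0 then (1:ℝ) else 0) * (θ k - θ j))
        = θ k - θ k0 := by
      rw [Finset.sum_congr rfl (fun j _ => show (if j = k0 then (1:ℝ) else 0) * (θ k - θ j) = if j = k0 then θ k - θ j else 0 by split <;> simp),
        Finset.sum_ite_eq' F k0]
      simp [hk0F]
    rwa [hsum] at h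
  -- limit of TT
  set c : ℝ := if k = k0 then 0 else 1 with hc
  have hTlim : Tendsto TT atTop (𝓝 c) := by
    have h := hSlim.sub (hμlim k)
    have he : (1 : ℝ) - (if k = k0 then 1 else 0) = c := by
      by_cases hkk : k = k0 <;> simp [hc, hkk]
    rw [he] at h
    exact h
  have hclogc : c * Real.log c = 0 := by
    by_cases hkk : k = k0 <;> simp [hc, hkk]
  -- T log T → 0
  have hTlogT : Tendsto (fun n => TT n * Real.log (TT n)) atTop (𝓝 0) := by
    have := (Real.continuous_mul_log.tendsto c).comp hTlim
    rwa [hclogc] at this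
  -- log S → 0
  have hlogS : Tendsto (fun n => Real.log (SS n)) atTop (𝓝 0) := by
    have := ((Real.continuousAt_log one_ne_zero).tendsto).comp hSlim
    simpa [Function.comp_def] using this
  -- A log S → 0
  have h1 : Tendsto (fun n => AA n * Real.log (SS n)) atTop (𝓝 0) := by
    have := hAlim.mul hlogS
    simpa using this
  -- A log T → 0 by squeezing
  have h2 : Tendsto (fun n => AA n * Real.log (TT n)) atTop (𝓝 0) := by
    have hbound : ∀ n, ‖AA n * Real.log (TT n)‖ ≤ C * |TT n * Real.log (TT n)| := by
      intro n
      rw [Real.norm_eq_abs, abs_mul, abs_mul]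
      rw [abs_of_nonneg (hAnn n), abs_of_nonneg (hTnn n)]
      rw [← mul_assoc]
      exact mul_le_mul_of_nonneg_right (hAle n) (abs_nonneg _)
    have hg : Tendsto (fun n => C * |TT n * Real.log (TT n)|) atTop (𝓝 0) := by
      have := (hTlogT.abs).const_mul C
      simpa using this
    exact squeeze_zero_norm hbound hg
  have hmain : Tendsto (fun n => AA n * Real.log (SS n) - AA n * Real.log (TT n))
      atTop (𝓝 0) := by simpa using h1.sub h2
  refine hmain.congr fun n => ?_
  -- pointwise identity
  show AA n * Real.log (SS n) - AA n * Real.log (TT n)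
      = μn n k * ((θ k - (∑ j ∈ F, μn n j * θ j) / SS n) / (μn n k / SS n))
        * Real.log (1 / (1 - μn n k / SS n))
  have hSne : SS n ≠ 0 := (hSpos n).ne'
  have hμne : μn n k ≠ 0 := (hμn n k).ne'
  have hA' : μn n k * ((θ k - (∑ j ∈ F, μn n j * θ j) / SS n) / (μn n k / SS n))
      = AA n := by
    have e1 : AA n = SS n * θ k - ∑ j ∈ F, μn n j * θ j := by
      simp only [hAA, hSS, mul_sub, Finset.sum_sub_distrib, Finset.sum_mul]
    rw [e1]
    field_simp
  have hPn : 1 - μn n k / SS n = TT n / SS n := by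
    simp only [hTT]; field_simp
  rw [hA', hPn]
  rcases eq_or_lt_of_le (hTnn n) with hT0 | hT0
  · -- TT n = 0, then AA n = 0
    have hA0 : AA n = 0 := le_antisymm (by
      have := hAle n; rw [← hT0] at this; simpa using this) (hAnn n)
    rw [hA0]; ring
  · rw [one_div, Real.log_inv, Real.log_div hT0.ne' hSne]
    ring
end
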